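/- arXiv:1907.04644 — 2 statements merged into one kernel-verified Lean document; each statement's English description precedes it below -/
import Mathlib

section
/- Let u ∈ ℝ^n with u > 0 entrywise and ‖u‖ = 1, set λ = λ(u) = min_i (𝒜(u)u)_i / u_i, and let (Δ, δ) solve the Newton system at (u,λ). Then u + Δ > 0 entrywise, and consequently u + θΔ > 0 entrywise for every θ ∈ (0,1]. -/
open Matrix Finset

noncomputable def enorm' {n : ℕ} (u : Fin n → ℝ) : ℝ := Real.sqrt (∑ i, u i ^ 2)

def IsZMatrix {n : ℕ} (B : Matrix (Fin n) (Fin n) ℝ) : Prop :=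
  ∀ i j, i ≠ j → B i j ≤ 0

def IsIrreducibleMat {n : ℕ} (B : Matrix (Fin n) (Fin n) ℝ) : Prop :=
  ¬ ∃ S : Finset (Fin n), S.Nonempty ∧ S ≠ Finset.univ ∧
    ∀ i ∈ S, ∀ j ∉ S, B i j = 0

def IsNonsingularM {n : ℕ} (B : Matrix (Fin n) (Fin n) ℝ) : Prop :=
  IsZMatrix B ∧ IsUnit B ∧ ∀ i j, 0 ≤ B⁻¹ i j

noncomputable def calA {n : ℕ} (A : Matrix (Fin n) (Fin n) ℝ) (Γ : ℝ) (a : Fin n → ℝ)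
    (u : Fin n → ℝ) : Matrix (Fin n) (Fin n) ℝ :=
  A + Γ • Matrix.diagonal (fun i => 1 - 1 / (a i + u i ^ 2))

noncomputable def rvec {n : ℕ} (A : Matrix (Fin n) (Fin n) ℝ) (Γ : ℝ) (a : Fin n → ℝ)
    (u : Fin n → ℝ) (lam : ℝ) : Fin n → ℝ :=
  calA A Γ a u *ᵥ u - lam • u

noncomputable def Jmat {n : ℕ} (A : Matrix (Fin n) (Fin n) ℝ) (Γ : ℝ) (a : Fin n → ℝ)
    (u : Fin n → ℝ) (lam : ℝ) : Matrix (Fin n) (Fin n) ℝ :=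
  A + (Γ - lam) • (1 : Matrix (Fin n) (Fin n) ℝ)
    - Γ • Matrix.diagonal (fun i => (a i - u i ^ 2) / (a i + u i ^ 2) ^ 2)

noncomputable def lamOf {n : ℕ} [NeZero n] (A : Matrix (Fin n) (Fin n) ℝ) (Γ : ℝ)
    (a : Fin n → ℝ) (u : Fin n → ℝ) : ℝ :=
  ⨅ i, (calA A Γ a u *ᵥ u) i / u i

def NewtonSystem {n : ℕ} (A : Matrix (Fin n) (Fin n) ℝ) (Γ : ℝ) (a : Fin n → ℝ)
    (u : Fin n → ℝ) (lam : ℝ) (Δ : Fin n → ℝ) (δ : ℝ) : Prop :=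
  Jmat A Γ a u lam *ᵥ Δ - δ • u = -rvec A Γ a u lam ∧
  -(u ⬝ᵥ Δ) = -(1/2 * (u ⬝ᵥ u - 1))

/-!
The Jacobian `J = Jmat A Γ a u λ` is a Z-matrix, and since `λ(u)` is the smallest Collatz–Wielandt
ratio the residual `r = 𝒜(u)u - λu` is nonnegative. A direct computation gives
`J u = r + w` with `w_i = 2Γu_i³/(a_i + u_i²)² > 0`, so `J u > 0`; for a Z-matrix this makes `J`
monotone: `J y > 0` forces `y > 0`. The Newton equation reads `J Δ = δu - r` and, as `‖u‖ = 1`,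
`u ⊥ Δ`. If `δ < 0`, then `J(-Δ) > 0`, so `-Δ > 0`, contradicting `u ⊥ Δ`. Hence `δ ≥ 0` and
`J(u + Δ) = δu + w > 0`, so `u + Δ > 0`.
-/

section ZMatrix

variable {n : ℕ} {J : Matrix (Fin n) (Fin n) ℝ}

theorem IsZMatrix.mulVec_apply_nonpos {z : Fin n → ℝ} (hJ : IsZMatrix J) (hz : ∀ j, 0 ≤ z j)
    {k : Fin n} (hzk : z k = 0) : (J *ᵥ z) k ≤ 0 := by
  simp only [mulVec, dotProduct]
  refine Finset.sum_nonpos fun j _ => ?_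
  rcases eq_or_ne k j with rfl | hkj
  · simp [hzk]
  · exact mul_nonpos_of_nonpos_of_nonneg (hJ k j hkj) (hz j)

theorem IsZMatrix.pos_of_mulVec_pos (hJ : IsZMatrix J) {x : Fin n → ℝ} (hx : ∀ i, 0 < x i)
    (hJx : ∀ i, 0 < (J *ᵥ x) i) {y : Fin n → ℝ} (hJy : ∀ i, 0 < (J *ᵥ y) i) (i : Fin n) :
    0 < y i := by
  have : Nonempty (Fin n) := ⟨i⟩
  obtain ⟨k, hk⟩ := Finite.exists_min fun j => y j / x j
  set t := y k / x k
  have hty : ∀ j, t * x j ≤ y j := fun j => (le_div_iff₀ (hx j)).mp (hk j)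
  have hk0 : (y - t • x) k = 0 := by simp [t, div_mul_cancel₀ _ (hx k).ne']
  have hJk : (J *ᵥ (y - t • x)) k ≤ 0 :=
    hJ.mulVec_apply_nonpos (fun j => by simpa using hty j) hk0
  rw [mulVec_sub, mulVec_smul] at hJk
  have ht : 0 < t := by
    by_contra! ht
    have : t * (J *ᵥ x) k ≤ 0 := mul_nonpos_of_nonpos_of_nonneg ht (hJx k).le
    simp only [Pi.sub_apply, Pi.smul_apply, smul_eq_mul] at hJk
    linarith [hJy k]
  exact (mul_pos ht (hx i)).trans_le (hty i)

end ZMatrix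

section Jacobian

variable {n : ℕ} (A : Matrix (Fin n) (Fin n) ℝ) (Γ : ℝ) (a u : Fin n → ℝ)

theorem isZMatrix_Jmat (hA : IsZMatrix A) (lam : ℝ) : IsZMatrix (Jmat A Γ a u lam) := by
  intro i j hij
  simpa [Jmat, one_apply_ne hij, diagonal_apply_ne _ hij] using hA i j hij

theorem rvec_lamOf_nonneg [NeZero n] (hu : ∀ i, 0 < u i) (i : Fin n) :
    0 ≤ rvec A Γ a u (lamOf A Γ a u) i := by
  have hle : lamOf A Γ a u ≤ (calA A Γ a u *ᵥ u) i / u i :=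
    ciInf_le (Finite.bddBelow_range _) i
  rw [le_div_iff₀ (hu i)] at hle
  simpa [rvec] using hle

theorem Jmat_mulVec_self_sub_rvec (lam : ℝ) (i : Fin n) :
    (Jmat A Γ a u lam *ᵥ u - rvec A Γ a u lam) i = 2 * Γ * u i ^ 3 / (a i + u i ^ 2) ^ 2 := by
  simp only [Jmat, rvec, calA, Pi.sub_apply, sub_mulVec, add_mulVec, smul_mulVec,
    mulVec_diagonal, one_mulVec, Pi.add_apply, Pi.smul_apply, smul_eq_mul]
  -- the identity also holds, with both sides `0`, when `a i + u i ^ 2 = 0`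
  rcases eq_or_ne (a i + u i ^ 2) 0 with hd | hd
  · simp only [hd, div_zero, zero_pow two_ne_zero]
    ring
  · field_simp
    ring

theorem rvec_lt_Jmat_mulVec_self (ha : ∀ i, 0 < a i) (hΓ : 0 < Γ) (hu : ∀ i, 0 < u i)
    (lam : ℝ) (i : Fin n) : rvec A Γ a u lam i < (Jmat A Γ a u lam *ᵥ u) i := by
  rw [← sub_pos, ← Pi.sub_apply, Jmat_mulVec_self_sub_rvec]
  have := ha i
  have := hu i
  positivity

end Jacobian

section Newton

variable {n : ℕ} {A : Matrix (Fin n) (Fin n) ℝ} {Γ : ℝ} {a u : Fin n → ℝ} {lam : ℝ}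
  {Δ : Fin n → ℝ} {δ : ℝ}

theorem NewtonSystem.Jmat_mulVec (hN : NewtonSystem A Γ a u lam Δ δ) :
    Jmat A Γ a u lam *ᵥ Δ = δ • u - rvec A Γ a u lam := by
  rw [sub_eq_iff_eq_add.mp hN.1]
  abel

theorem NewtonSystem.dotProduct_eq_zero (hN : NewtonSystem A Γ a u lam Δ δ)
    (hnorm : enorm' u = 1) : u ⬝ᵥ Δ = 0 := by
  have huu : u ⬝ᵥ u = 1 := by
    rw [enorm', Real.sqrt_eq_one] at hnorm
    simpa [dotProduct, sq] using hnorm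
  simpa [huu] using hN.2

end Newton

theorem stmt_5_general {n : ℕ} [NeZero n] (A : Matrix (Fin n) (Fin n) ℝ) (a : Fin n → ℝ) (Γ : ℝ)
    (ha : ∀ i, 0 < a i) (hΓ : 0 < Γ)
    (hA : IsNonsingularM A)
    (u : Fin n → ℝ) (hu : ∀ i, 0 < u i) (hnorm : enorm' u = 1)
    (Δ : Fin n → ℝ) (δ : ℝ)
    (hN : NewtonSystem A Γ a u (lamOf A Γ a u) Δ δ) :
    (∀ i, 0 < (u + Δ) i) ∧
    (∀ θ : ℝ, 0 < θ → θ ≤ 1 → ∀ i, 0 < (u + θ • Δ) i) := by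
  set lam := lamOf A Γ a u
  have hZ : IsZMatrix (Jmat A Γ a u lam) := isZMatrix_Jmat A Γ a u hA.1 lam
  have hr : ∀ i, 0 ≤ rvec A Γ a u lam i := rvec_lamOf_nonneg A Γ a u hu
  have hw := rvec_lt_Jmat_mulVec_self A Γ a u ha hΓ hu lam
  have hJu : ∀ i, 0 < (Jmat A Γ a u lam *ᵥ u) i := fun i => (hr i).trans_lt (hw i)
  have hJΔ := hN.Jmat_mulVec
  have hδ : 0 ≤ δ := by
    by_contra! hδ
    have hΔ := hZ.pos_of_mulVec_pos hu hJu (y := -Δ) fun i => by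
      simp only [mulVec_neg, hJΔ, Pi.neg_apply, Pi.sub_apply, Pi.smul_apply, smul_eq_mul]
      nlinarith [hr i, hu i]
    have : 0 < u ⬝ᵥ -Δ := Finset.sum_pos (fun i _ => mul_pos (hu i) (hΔ i)) univ_nonempty
    simp [hN.dotProduct_eq_zero hnorm] at this
  have hpos : ∀ i, 0 < (u + Δ) i := hZ.pos_of_mulVec_pos hu hJu fun i => by
    simp only [mulVec_add, hJΔ, Pi.add_apply, Pi.sub_apply, Pi.smul_apply, smul_eq_mul]
    nlinarith [hu i, hw i]
  refine ⟨hpos, fun θ hθ0 hθ1 i => ?_⟩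
  -- `u + θΔ = (1 - θ) u + θ (u + Δ)`
  have := hpos i
  simp only [Pi.add_apply, Pi.smul_apply, smul_eq_mul] at this ⊢
  nlinarith [hu i]

theorem stmt_5 {n : ℕ} [NeZero n] (A : Matrix (Fin n) (Fin n) ℝ) (a : Fin n → ℝ) (Γ : ℝ)
    (ha : ∀ i, 0 < a i) (hΓ : 0 < Γ)
    (hA : IsNonsingularM A) (hAirr : IsIrreducibleMat A)
    (u : Fin n → ℝ) (hu : ∀ i, 0 < u i) (hnorm : enorm' u = 1)
    (Δ : Fin n → ℝ) (δ : ℝ)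
    (hN : NewtonSystem A Γ a u (lamOf A Γ a u) Δ δ) :
    (∀ i, 0 < (u + Δ) i) ∧
    (∀ θ : ℝ, 0 < θ → θ ≤ 1 → ∀ i, 0 < (u + θ • Δ) i) :=
  stmt_5_general A a Γ ha hΓ hA u hu hnorm Δ δ hN
end

section
/- Let (u_j)_{j∈ℕ} be a sequence of vectors in ℝ^n with u_j > 0 entrywise and ‖u_j‖ = 1 for all j, and suppose there exists c ∈ ℝ with λ(u_j) ≥ c for all j. If u_j converges to a vector v as j → ∞, then v > 0 entrywise. -/
open Matrix Finset

noncomputable def enorm {n : ℕ} (u : Fin n → ℝ) : ℝ := Real.sqrt (∑ i, u i ^ 2)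

/-!
The bound `λ(u_j) ≥ c` gives `c • u_j ≤ 𝒜(u_j) u_j`, which passes to the limit:
`c • v ≤ 𝒜(v) v`. The limit `v` is nonnegative and of norm one. At a coordinate where
`v i = 0` the diagonal part of `𝒜(v)` contributes nothing, so
`0 ≤ (A v)_i = ∑_{k ≠ i} A_ik v_k`, a sum of nonpositive terms; hence `A_ij = 0` whenever
`v j > 0`. The zero set of `v` is then a proper nonempty invariant set of `A`, contradicting
irreducibility.
-/

open Filter Topology

variable {n : ℕ}

theorem IsZMatrix.mul_eq_zero_of_mulVec_nonneg {B : Matrix (Fin n) (Fin n) ℝ} (hB : IsZMatrix B)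
    {v : Fin n → ℝ} (hv : 0 ≤ v) {i : Fin n} (hvi : v i = 0) (hBv : 0 ≤ (B *ᵥ v) i)
    (j : Fin n) : B i j * v j = 0 := by
  have hterm : ∀ k ∈ univ, B i k * v k ≤ 0 := fun k _ => by
    rcases eq_or_ne i k with rfl | hik
    · simp [hvi]
    · exact mul_nonpos_of_nonpos_of_nonneg (hB i k hik) (hv k)
  have hsum : ∑ k, B i k * v k = 0 := le_antisymm (sum_nonpos hterm) hBv
  exact (sum_eq_zero_iff_of_nonpos hterm).mp hsum j (mem_univ j)

/-- A strong minimum principle for irreducible Z-matrices. -/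
theorem IsIrreducibleMat.pos_of_mulVec_nonneg {B : Matrix (Fin n) (Fin n) ℝ}
    (hirr : IsIrreducibleMat B) (hB : IsZMatrix B) {v : Fin n → ℝ} (hv : 0 ≤ v)
    (hv0 : v ≠ 0) (hBv : ∀ i, v i = 0 → 0 ≤ (B *ᵥ v) i) (i : Fin n) : 0 < v i := by
  classical
  by_contra! hvi
  refine hirr ⟨univ.filter (v · = 0), ⟨i, by simp [le_antisymm hvi (hv i)]⟩, ?_, ?_⟩
  · intro huniv
    exact hv0 (funext fun k => by simpa using (Finset.ext_iff.mp huniv k).mpr (mem_univ k))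
  · intro k hk j hj
    simp only [mem_filter, mem_univ, true_and] at hk hj
    exact (mul_eq_zero.mp (hB.mul_eq_zero_of_mulVec_nonneg hv hk (hBv k hk) j)).resolve_right hj

section calA

variable (A : Matrix (Fin n) (Fin n) ℝ) (Γ : ℝ) (a : Fin n → ℝ)

theorem calA_mulVec_apply (u : Fin n → ℝ) (i : Fin n) :
    (calA A Γ a u *ᵥ u) i = (A *ᵥ u) i + Γ * (1 - 1 / (a i + u i ^ 2)) * u i := by
  simp [calA, add_mulVec, smul_mulVec, mulVec_diagonal, mul_assoc]

theorem continuous_calA_mulVec (ha : ∀ i, 0 < a i) :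
    Continuous fun u => calA A Γ a u *ᵥ u := by
  refine continuous_pi fun i => ?_
  simp only [calA_mulVec_apply]
  have hden (u : Fin n → ℝ) : a i + u i ^ 2 ≠ 0 :=
    (add_pos_of_pos_of_nonneg (ha i) (sq_nonneg _)).ne'
  fun_prop (disch := exact hden _)

theorem mul_le_calA_mulVec_of_le_lamOf [NeZero n] {u : Fin n → ℝ} (hu : ∀ i, 0 < u i)
    {c : ℝ} (hc : c ≤ lamOf A Γ a u) (i : Fin n) : c * u i ≤ (calA A Γ a u *ᵥ u) i := by
  have hi : c ≤ (calA A Γ a u *ᵥ u) i / u i :=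
    hc.trans (ciInf_le (Set.finite_range _).bddBelow i)
  exact (le_div_iff₀ (hu i)).mp hi

end calA

theorem stmt_12_general {n : ℕ} [NeZero n] (A : Matrix (Fin n) (Fin n) ℝ) (a : Fin n → ℝ) (Γ : ℝ)
    (ha : ∀ i, 0 < a i)
    (hA : IsNonsingularM A) (hAirr : IsIrreducibleMat A)
    (u : ℕ → Fin n → ℝ)
    (hu : ∀ j, ∀ i, 0 < u j i) (hnorm : ∀ j, _root_.enorm (u j) = 1)
    (c : ℝ) (hc : ∀ j, c ≤ lamOf A Γ a (u j))
    (v : Fin n → ℝ) (hconv : Filter.Tendsto u Filter.atTop (nhds v)) :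
    ∀ i, 0 < v i := by
  have hv_nonneg : 0 ≤ v := ge_of_tendsto' hconv fun j i => (hu j i).le
  have henorm_cont : Continuous (_root_.enorm : (Fin n → ℝ) → ℝ) := by
    unfold _root_.enorm
    fun_prop
  have hv_norm : _root_.enorm v = 1 :=
    tendsto_nhds_unique (henorm_cont.tendsto v |>.comp hconv)
      (by simp only [Function.comp_def, hnorm]; exact tendsto_const_nhds)
  have hv_ne : v ≠ 0 := by
    rintro rfl
    simp [_root_.enorm] at hv_norm
  have hcalA_tendsto := (continuous_calA_mulVec A Γ a ha).tendsto v |>.comp hconv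
  have hbound (i : Fin n) : c * v i ≤ (calA A Γ a v *ᵥ v) i :=
    le_of_tendsto_of_tendsto' (((continuous_apply i).tendsto v).comp hconv |>.const_mul c)
      ((continuous_apply i).tendsto _ |>.comp hcalA_tendsto)
      fun j => mul_le_calA_mulVec_of_le_lamOf A Γ a (hu j) (hc j) i
  refine hAirr.pos_of_mulVec_nonneg hA.1 hv_nonneg hv_ne fun i hvi => ?_
  simpa [calA_mulVec_apply, hvi] using hbound i

theorem stmt_12 {n : ℕ} [NeZero n] (A : Matrix (Fin n) (Fin n) ℝ) (a : Fin n → ℝ) (Γ : ℝ)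
    (ha : ∀ i, 0 < a i) (hΓ : 0 < Γ)
    (hA : IsNonsingularM A) (hAirr : IsIrreducibleMat A)
    (u : ℕ → Fin n → ℝ)
    (hu : ∀ j, ∀ i, 0 < u j i) (hnorm : ∀ j, _root_.enorm (u j) = 1)
    (c : ℝ) (hc : ∀ j, c ≤ lamOf A Γ a (u j))
    (v : Fin n → ℝ) (hconv : Filter.Tendsto u Filter.atTop (nhds v)) :
    ∀ i, 0 < v i :=
  stmt_12_general A a Γ ha hA hAirr u hu hnorm c hc v hconv
end
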